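/- Let q be a prime, let X be a vertex-transitive finite simple graph on mq vertices, let G be a transitive subgroup of the automorphism group of X, and let N be a normal subgroup of G all of whose orbits on the vertex set have size q. Then X admits an (m,q)-semiregular automorphism whose orbits coincide with the orbits of N. -/

import Mathlib

open SimpleGraph

/-- A graph is vertex-transitive if any vertex can be mapped to any other by an automorphism. -/
def SimpleGraph.IsVertexTransitive {V : Type*} (X : SimpleGraph V) : Prop :=
  ∀ u v : V, ∃ φ : X ≃g X, φ u = v

/-- A graph has a Hamilton path if some walk visits every vertex exactly once. -/
def SimpleGraph.HasHamiltonianPath {V : Type*} [DecidableEq V] (X : SimpleGraph V) : Prop :=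
  ∃ (u v : V) (w : X.Walk u v), w.IsHamiltonian

/-- A graph has a Hamilton cycle if some closed walk is a Hamiltonian cycle. -/
def SimpleGraph.HasHamiltonianCycle {V : Type*} [DecidableEq V] (X : SimpleGraph V) : Prop :=
  ∃ (u : V) (w : X.Walk u u), w.IsHamiltonianCycle

/-- A subgroup of the automorphism group acts transitively on the vertices. -/
def SimpleGraph.IsTransitiveSubgroup {V : Type*} (X : SimpleGraph V)
    (G : Subgroup (X ≃g X)) : Prop :=
  ∀ u v : V, ∃ g ∈ G, g u = v

/-- The orbit of a vertex under a subgroup of the automorphism group. -/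
def SimpleGraph.autOrbit {V : Type*} (X : SimpleGraph V) (N : Subgroup (X ≃g X))
    (v : V) : Set V :=
  {w | ∃ g ∈ N, g v = w}

/-- `N` is a subgroup of `G` which is normal in `G`. -/
def SimpleGraph.IsNormalIn {V : Type*} (X : SimpleGraph V)
    (N G : Subgroup (X ≃g X)) : Prop :=
  N ≤ G ∧ ∀ g ∈ G, ∀ n ∈ N, g * n * g⁻¹ ∈ N

/-- `N` is a minimal normal subgroup of the (subgroup) `G`: it is a nontrivial normal
subgroup of `G` and the only normal subgroups of `G` contained in it are `⊥` and `N`. -/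
def SimpleGraph.IsMinimalNormalIn {V : Type*} (X : SimpleGraph V)
    (N G : Subgroup (X ≃g X)) : Prop :=
  X.IsNormalIn N G ∧ N ≠ ⊥ ∧
    ∀ M : Subgroup (X ≃g X), X.IsNormalIn M G → M ≤ N → M = ⊥ ∨ M = N

/-- An automorphism `ρ` is `(m,n)`-semiregular if the cyclic group it generates has exactly
`m` orbits on the vertex set, each of size `n`. -/
def SimpleGraph.IsSemiregular {V : Type*} (X : SimpleGraph V) (ρ : X ≃g X)
    (m n : ℕ) : Prop :=
  (∀ v : V, (X.autOrbit (Subgroup.zpowers ρ) v).ncard = n) ∧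
    {S : Set V | ∃ v, S = X.autOrbit (Subgroup.zpowers ρ) v}.ncard = m

/-- The quotient graph of `X` corresponding to a partition `P` of its vertex set. -/
def SimpleGraph.quotientGraph {V : Type*} (X : SimpleGraph V) (P : Set (Set V)) :
    SimpleGraph ↥P where
  Adj A B := A ≠ B ∧ ∃ a ∈ (A : Set V), ∃ b ∈ (B : Set V), X.Adj a b
  symm := ⟨by
    rintro A B ⟨hne, a, ha, b, hb, hab⟩
    exact ⟨hne.symm, b, hb, a, ha, hab.symm⟩⟩
  loopless := ⟨fun A h => h.1 rfl⟩

/-- The Petersen graph: vertices are the 2-element subsets of a 5-element set, adjacent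
when disjoint. -/
def PetersenGraph : SimpleGraph {s : Finset (Fin 5) // s.card = 2} where
  Adj s t := Disjoint (s : Finset (Fin 5)) (t : Finset (Fin 5))
  symm := ⟨fun _ _ h => h.symm⟩
  loopless := ⟨fun s h => by
    have hs : (s : Finset (Fin 5)) = ⊥ := disjoint_self.mp h
    have h2 := s.2
    rw [hs] at h2
    simp at h2⟩

/-- The truncation of a graph `Y`: vertices are incident vertex-edge pairs, two pairs being
adjacent iff they share the vertex but not the edge, or share the edge but not the vertex. -/
def SimpleGraph.truncation {W : Type*} (Y : SimpleGraph W) :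
    SimpleGraph {ve : W × Y.edgeSet // ve.1 ∈ (ve.2 : Sym2 W)} where
  Adj a b := (a.1.1 = b.1.1 ∧ a.1.2 ≠ b.1.2) ∨ (a.1.2 = b.1.2 ∧ a.1.1 ≠ b.1.1)
  symm := ⟨by
    rintro a b (⟨h1, h2⟩ | ⟨h1, h2⟩)
    · exact Or.inl ⟨h1.symm, h2.symm⟩
    · exact Or.inr ⟨h1.symm, h2.symm⟩⟩
  loopless := ⟨fun a h => by rcases h with ⟨_, h⟩ | ⟨_, h⟩ <;> exact h rfl⟩

/-- A graph is genuinely imprimitive if some transitive subgroup of its automorphism group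
has a nontrivial intransitive normal subgroup. -/
def SimpleGraph.IsGenuinelyImprimitive {V : Type*} (X : SimpleGraph V) : Prop :=
  ∃ G N : Subgroup (X ≃g X), X.IsTransitiveSubgroup G ∧ X.IsNormalIn N G ∧
    N ≠ ⊥ ∧ ¬ X.IsTransitiveSubgroup N

/-- A partition of the vertex set invariant under a subgroup of automorphisms. -/
def SimpleGraph.IsInvariantPartition {V : Type*} (X : SimpleGraph V)
    (G : Subgroup (X ≃g X)) (P : Set (Set V)) : Prop :=
  Setoid.IsPartition P ∧ ∀ g ∈ G, ∀ B ∈ P, (g : X ≃g X) '' B ∈ P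

/-- A graph is quasiprimitive if some transitive subgroup of its automorphism group preserves
a nontrivial partition of the vertex set, but no transitive subgroup of the automorphism
group has a nontrivial intransitive normal subgroup. -/
def SimpleGraph.IsQuasiprimitive {V : Type*} (X : SimpleGraph V) : Prop :=
  (∃ G : Subgroup (X ≃g X), X.IsTransitiveSubgroup G ∧
    ∃ P : Set (Set V), X.IsInvariantPartition G P ∧
      P ≠ Set.range (fun v => ({v} : Set V)) ∧ P ≠ {Set.univ}) ∧
  ¬ X.IsGenuinelyImprimitive

/-- A graph is primitive if every transitive subgroup of its automorphism group preserves
only the trivial partitions of the vertex set. -/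
def SimpleGraph.IsPrimitiveGraph {V : Type*} (X : SimpleGraph V) : Prop :=
  ∀ G : Subgroup (X ≃g X), X.IsTransitiveSubgroup G →
    ∀ P : Set (Set V), X.IsInvariantPartition G P →
      P = Set.range (fun v => ({v} : Set V)) ∨ P = {Set.univ}


/-!
Let `A` be the group of automorphisms fixing every `N`-orbit setwise and `S` a Sylow
`q`-subgroup of `A`. Since `N` is transitive on each orbit `B` and `q²` does not divide `q!`,
the image of `S` in `Sym B` is cyclic of order `q` and transitive. Choose for each orbit `B`
an element `s_B ∈ S` acting nontrivially on `B`, in such a way that `s_B` depends only on the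
set of elements of `S` fixing `B` pointwise, and let `ρ` act on `B` as `s_B`. For two
vertices `a ∈ B` and `b ∈ B'`, either `s_B = s_{B'}`, or some `s ∈ S` fixes one of the
orbits pointwise and acts nontrivially on the other, and then a suitable `s ^ k * s_B` agrees
with `ρ` at both `a` and `b`. So `ρ` agrees with an automorphism on every pair of vertices,
hence is itself an automorphism; its orbits are the `N`-orbits.
-/

open MulAction Equiv

section PrimeDegree

lemma Nat.Prime.not_sq_dvd_factorial {q : ℕ} (hq : q.Prime) : ¬ q ^ 2 ∣ q.factorial := by
  obtain ⟨n, rfl⟩ : ∃ n, q = n + 1 := ⟨q - 1, by have := hq.pos; omega⟩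
  rw [Nat.factorial_succ, sq, Nat.mul_dvd_mul_iff_left n.succ_pos]
  intro h
  have := hq.dvd_factorial.mp h
  omega

lemma MonoidHom.card_dvd_card_range_of_forall_exists_apply_eq {α G : Type*} [Group G] [Finite G]
    [Nonempty α] (f : G →* Perm α) (htrans : ∀ x y : α, ∃ g, f g x = y) :
    Nat.card α ∣ Nat.card f.range := by
  obtain ⟨x⟩ := ‹Nonempty α›
  have horbit : orbit f.range x = Set.univ := by
    refine Set.eq_univ_of_forall fun y => ?_
    obtain ⟨g, rfl⟩ := htrans x y
    exact mem_orbit x (⟨f g, g, rfl⟩ : f.range)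
  rw [← Set.ncard_univ, ← horbit, ← index_stabilizer]
  exact Subgroup.index_dvd_card _

variable {α : Type*} [Finite α] {q : ℕ} [hq : Fact q.Prime]

lemma Equiv.Perm.exists_pow_apply_eq_of_orderOf_eq_card {σ : Perm α}
    (hα : Nat.card α = q) (hσ : orderOf σ = q) (x y : α) : ∃ n : ℕ, (σ ^ n) x = y := by
  classical
  have := Fintype.ofFinite α
  rw [Nat.card_eq_fintype_card] at hα
  have hcycle : σ.IsCycle := Perm.isCycle_of_prime_order'' (hα ▸ hq.out) (hσ.trans hα.symm)
  have hsupp : σ.support = Finset.univ :=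
    Finset.eq_univ_of_card _ (by rw [← hcycle.orderOf, hσ, hα])
  exact hcycle.exists_pow_eq (Perm.mem_support.mp (hsupp ▸ Finset.mem_univ x))
    (Perm.mem_support.mp (hsupp ▸ Finset.mem_univ y))

lemma Sylow.card_map_eq_prime_of_forall_exists_apply_eq {G : Type*} [Group G] [Finite G]
    (hα : Nat.card α = q) (f : G →* Perm α) (htrans : ∀ x y : α, ∃ g, f g x = y)
    (S : Sylow q G) : Nat.card (S.map f) = q := by
  obtain ⟨k, hk⟩ := IsPGroup.iff_card.mp (S.isPGroup'.map f)
  have hk_pos : 1 ≤ k := by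
    have : Nonempty α := (Nat.card_pos_iff.mp (hα ▸ hq.out.pos)).1
    have hq_range : q ^ 1 ∣ Nat.card f.range := by
      rw [pow_one, ← hα]
      exact f.card_dvd_card_range_of_forall_exists_apply_eq htrans
    have hT := (S.mapSurjective f.rangeRestrict_surjective).pow_dvd_card_of_pow_dvd_card hq_range
    rw [Sylow.coe_mapSurjective, ← Subgroup.card_map_of_injective f.range.subtype_injective,
      Subgroup.map_map, f.subtype_comp_rangeRestrict, hk] at hT
    exact (Nat.pow_dvd_pow_iff_le_right hq.out.one_lt).mp hT
  have hk_le : k ≤ 1 := by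
    by_contra! h
    have hdvd : q ^ k ∣ q.factorial := by
      rw [← hk]
      exact (Subgroup.card_subgroup_dvd_card _).trans (by rw [Nat.card_perm, hα])
    exact hq.out.not_sq_dvd_factorial ((pow_dvd_pow q h).trans hdvd)
  rw [hk, le_antisymm hk_le hk_pos, pow_one]

end PrimeDegree

namespace MulAction

variable {M α : Type*} [Group M] [MulAction M α]

lemma ncard_orbits_mul_eq_card [Finite α] {q : ℕ} (horb : ∀ a : α, (orbit M a).ncard = q) :
    {S : Set α | ∃ a, S = orbit M a}.ncard * q = Nat.card α := by
  have hrange :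
      {S : Set α | ∃ a, S = orbit M a} = Set.range (orbitRel.Quotient.orbit (G := M)) := by
    ext S
    constructor
    · rintro ⟨a, rfl⟩
      exact ⟨Quotient.mk'' a, rfl⟩
    · rintro ⟨ω, rfl⟩
      exact ⟨ω.out, orbitRel.Quotient.orbit_eq_orbit_out ω Quotient.out_eq'⟩
  have := Fintype.ofFinite (orbitRel.Quotient M α)
  rw [hrange, Set.ncard_range_of_injective orbitRel.Quotient.orbit_injective,
    Nat.card_congr (selfEquivSigmaOrbits M α), Nat.card_sigma]
  simp_rw [Nat.card_coe_set_eq, horb]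
  rw [Finset.sum_const, smul_eq_mul, Finset.card_univ, Nat.card_eq_fintype_card]

variable (α) in
def orbitsStabilizer (N : Subgroup M) : Subgroup M where
  carrier := {g | ∀ a : α, g • a ∈ orbit N a}
  one_mem' a := by simpa only [one_smul] using mem_orbit_self a
  mul_mem' {g h} hg hh a := by
    rw [mul_smul, ← orbit_eq_iff.mpr (hh a)]
    exact hg _
  inv_mem' {g} hg a := by
    have h := hg (g⁻¹ • a)
    rw [smul_inv_smul] at h
    exact mem_orbit_symm.mp h

variable {N : Subgroup M}

lemma le_orbitsStabilizer : N ≤ orbitsStabilizer α N :=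
  fun n hn a => mem_orbit a (⟨n, hn⟩ : N)

lemma smul_mem_orbit_of_mem_orbitsStabilizer {g : M} (hg : g ∈ orbitsStabilizer α N) {a b : α}
    (hb : b ∈ orbit N a) : g • b ∈ orbit N a :=
  orbit_eq_iff.mpr hb ▸ hg b

instance (a : α) : MulAction (orbitsStabilizer α N) (orbit N a) where
  smul g b := ⟨(g : M) • (b : α), smul_mem_orbit_of_mem_orbitsStabilizer g.2 b.2⟩
  one_smul b := Subtype.ext (one_smul M (b : α))
  mul_smul g h b := Subtype.ext (mul_smul (g : M) h (b : α))

@[simp]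
lemma coe_smul_orbit (a : α) (g : orbitsStabilizer α N) (b : orbit N a) :
    ((g • b : orbit N a) : α) = (g : M) • (b : α) := rfl

lemma toPerm_orbit_eq_one_iff {a : α} {g : orbitsStabilizer α N} :
    toPermHom _ (orbit N a) g = 1 ↔ (g : M) ∈ fixingSubgroup M (orbit N a) := by
  simp [Equiv.ext_iff, Subtype.ext_iff, mem_fixingSubgroup_iff]

section Sylow

variable [Finite M] [Finite α] {q : ℕ} [hq : Fact q.Prime]
  (horb : ∀ a : α, (orbit N a).ncard = q) (S : Sylow q (orbitsStabilizer α N))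
include horb

lemma card_map_sylow_toPermHom_orbit (a : α) :
    Nat.card (S.map (toPermHom _ (orbit N a))) = q := by
  refine Sylow.card_map_eq_prime_of_forall_exists_apply_eq
    (by rw [Nat.card_coe_set_eq, horb]) _ (fun x y => ?_) S
  obtain ⟨n, hn⟩ := exists_smul_eq N x y
  exact ⟨⟨n, le_orbitsStabilizer n.2⟩, Subtype.ext (congrArg Subtype.val hn)⟩

lemma exists_mem_sylow_notMem_fixingSubgroup (a : α) :
    ∃ s ∈ S, (s : M) ∉ fixingSubgroup M (orbit N a) := by
  by_contra! h
  have hbot : S.map (toPermHom _ (orbit N a)) = ⊥ :=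
    (Subgroup.map_eq_bot_iff _).mpr fun s hs => toPerm_orbit_eq_one_iff.mpr (h s hs)
  have := card_map_sylow_toPermHom_orbit horb S a
  rw [hbot, Subgroup.card_bot] at this
  exact hq.out.ne_one this.symm

variable {S} {a : α} {s : orbitsStabilizer α N}
  (hs : s ∈ S) (hsa : (s : M) ∉ fixingSubgroup M (orbit N a))
include hs hsa

lemma exists_zpow_smul_eq_of_mem_sylow {t : orbitsStabilizer α N} (ht : t ∈ S) :
    ∃ k : ℤ, ∀ b ∈ orbit N a, (t : M) • b = (s : M) ^ k • b := by
  set f := toPermHom (orbitsStabilizer α N) (orbit N a)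
  have hs1 : (⟨f s, Subgroup.mem_map_of_mem f hs⟩ : S.map f) ≠ 1 :=
    fun h => hsa (toPerm_orbit_eq_one_iff.mp (congrArg Subtype.val h))
  obtain ⟨k, hk⟩ := Subgroup.mem_zpowers_iff.mp
    (mem_zpowers_of_prime_card (card_map_sylow_toPermHom_orbit horb S a) hs1
      (g' := ⟨f t, Subgroup.mem_map_of_mem f ht⟩))
  refine ⟨k, fun b hb => ?_⟩
  have h : f (s ^ k) ⟨b, hb⟩ = f t ⟨b, hb⟩ := by
    rw [map_zpow]
    exact congrArg (fun σ : S.map f => (σ : Perm (orbit N a)) ⟨b, hb⟩) hk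
  exact (congrArg Subtype.val h).symm

lemma exists_pow_smul_eq_of_mem_sylow {b : α} (hb : b ∈ orbit N a) :
    ∃ n : ℕ, (s : M) ^ n • a = b := by
  set f := toPermHom (orbitsStabilizer α N) (orbit N a)
  have hord : orderOf (f s) = q := by
    have hdvd := Subgroup.orderOf_dvd_natCard _ (Subgroup.mem_map_of_mem f hs)
    rw [card_map_sylow_toPermHom_orbit horb S a] at hdvd
    refine ((Nat.dvd_prime hq.out).mp hdvd).resolve_left fun h => hsa ?_
    exact toPerm_orbit_eq_one_iff.mp (orderOf_eq_one_iff.mp h)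
  obtain ⟨n, hn⟩ := Equiv.Perm.exists_pow_apply_eq_of_orderOf_eq_card
    (by rw [Nat.card_coe_set_eq, horb]) hord ⟨a, mem_orbit_self a⟩ ⟨b, hb⟩
  rw [← map_pow] at hn
  exact ⟨n, congrArg Subtype.val hn⟩

end Sylow

section Orbitwise

variable {q : ℕ} (S : Sylow q (orbitsStabilizer α N))

noncomputable def orbitGenerator (a : α) : orbitsStabilizer α N :=
  Classical.epsilon fun s => s ∈ S ∧ (s : M) ∉ fixingSubgroup M (orbit N a)

noncomputable def orbitwiseSmul (a : α) : α :=
  (orbitGenerator S a : M) • a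

variable {S}

lemma orbitGenerator_eq_of_forall_mem_sylow_iff {a b : α}
    (h : ∀ s ∈ S,
      (s : M) ∈ fixingSubgroup M (orbit N a) ↔ (s : M) ∈ fixingSubgroup M (orbit N b)) :
    orbitGenerator S a = orbitGenerator S b :=
  congrArg Classical.epsilon <| funext fun s => propext <| and_congr_right fun hs => (h s hs).not

lemma orbitGenerator_eq_of_mem_orbit {a b : α} (hb : b ∈ orbit N a) :
    orbitGenerator S b = orbitGenerator S a :=
  orbitGenerator_eq_of_forall_mem_sylow_iff fun _ _ => by rw [orbit_eq_iff.mpr hb]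

lemma orbitwiseSmul_mem_orbit (a : α) : orbitwiseSmul S a ∈ orbit N a :=
  (orbitGenerator S a).2 a

lemma iterate_orbitwiseSmul (a : α) (n : ℕ) :
    (orbitwiseSmul S)^[n] a = (orbitGenerator S a : M) ^ n • a := by
  induction n with
  | zero => simp
  | succ n ih =>
    have hmem : (orbitGenerator S a : M) ^ n • a ∈ orbit N a :=
      smul_mem_orbit_of_mem_orbitsStabilizer (pow_mem (orbitGenerator S a).2 n) (mem_orbit_self a)
    rw [Function.iterate_succ_apply', ih, orbitwiseSmul, orbitGenerator_eq_of_mem_orbit hmem,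
      pow_succ', mul_smul]

variable [Finite M] [Finite α] [Fact q.Prime] (horb : ∀ a : α, (orbit N a).ncard = q)
include horb

lemma orbitGenerator_spec (a : α) :
    orbitGenerator S a ∈ S ∧ (orbitGenerator S a : M) ∉ fixingSubgroup M (orbit N a) :=
  Classical.epsilon_spec (exists_mem_sylow_notMem_fixingSubgroup horb S a)

lemma exists_iterate_orbitwiseSmul_eq {a b : α} (hb : b ∈ orbit N a) :
    ∃ n : ℕ, (orbitwiseSmul S)^[n] a = b := by
  obtain ⟨n, hn⟩ := exists_pow_smul_eq_of_mem_sylow horb (orbitGenerator_spec horb a).1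
    (orbitGenerator_spec horb a).2 hb
  exact ⟨n, (iterate_orbitwiseSmul a n).trans hn⟩

lemma exists_smul_eq_orbitwiseSmul_of_mem_fixingSubgroup {a b : α} {s : orbitsStabilizer α N}
    (hs : s ∈ S) (hsa : (s : M) ∈ fixingSubgroup M (orbit N a))
    (hsb : (s : M) ∉ fixingSubgroup M (orbit N b)) :
    ∃ c : M, c • a = orbitwiseSmul S a ∧ c • b = orbitwiseSmul S b := by
  set wa := orbitGenerator S a
  set wb := orbitGenerator S b
  obtain ⟨k, hk⟩ := exists_zpow_smul_eq_of_mem_sylow horb hs hsb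
    (mul_mem (orbitGenerator_spec horb b).1 (inv_mem (orbitGenerator_spec horb a).1))
  refine ⟨(s : M) ^ k * wa, ?_, ?_⟩
  · rw [mul_smul]
    exact (mem_fixingSubgroup_iff M).mp (zpow_mem hsa k) _ (orbitwiseSmul_mem_orbit a)
  · rw [mul_smul, ← hk _ (smul_mem_orbit_of_mem_orbitsStabilizer wa.2 (mem_orbit_self b)),
      Subgroup.coe_mul, Subgroup.coe_inv, mul_smul, inv_smul_smul]
    rfl

lemma exists_smul_eq_orbitwiseSmul (a b : α) :
    ∃ c : M, c • a = orbitwiseSmul S a ∧ c • b = orbitwiseSmul S b := by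
  by_cases h : ∀ s ∈ S,
    (s : M) ∈ fixingSubgroup M (orbit N a) ↔ (s : M) ∈ fixingSubgroup M (orbit N b)
  · refine ⟨orbitGenerator S a, rfl, ?_⟩
    rw [orbitGenerator_eq_of_forall_mem_sylow_iff h]
    rfl
  · push Not at h
    obtain ⟨s, hs, ⟨hsa, hsb⟩ | ⟨hsa, hsb⟩⟩ := h
    · exact exists_smul_eq_orbitwiseSmul_of_mem_fixingSubgroup horb hs hsa hsb
    · obtain ⟨c, hcb, hca⟩ :=
        exists_smul_eq_orbitwiseSmul_of_mem_fixingSubgroup horb hs hsb hsa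
      exact ⟨c, hca, hcb⟩

lemma orbit_zpowers_eq_of_smul_eq_orbitwiseSmul {g : M} (hg : ∀ a, g • a = orbitwiseSmul S a)
    (a : α) :
    orbit (Subgroup.zpowers g) a = orbit N a := by
  have hgA : Subgroup.zpowers g ≤ orbitsStabilizer α N :=
    Subgroup.zpowers_le.mpr fun b => hg b ▸ orbitwiseSmul_mem_orbit b
  ext b
  constructor
  · rintro ⟨h, rfl⟩
    exact hgA h.2 a
  · intro hb
    obtain ⟨n, hn⟩ := exists_iterate_orbitwiseSmul_eq horb hb
    refine ⟨⟨g ^ n, Subgroup.npow_mem_zpowers g n⟩, ?_⟩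
    rw [← hn, show orbitwiseSmul S = (g • ·) from funext fun b => (hg b).symm, smul_iterate]
    rfl

end Orbitwise

end MulAction

namespace SimpleGraph

variable {V : Type*} {X : SimpleGraph V}

lemma autOrbit_eq_orbit (H : Subgroup (X ≃g X)) (v : V) :
    X.autOrbit H v = MulAction.orbit H v := by
  ext w
  simp [autOrbit, MulAction.mem_orbit_iff, Subgroup.smul_def]

instance [Finite V] : Finite (X ≃g X) :=
  Finite.of_injective _ (DFunLike.coe_injective (F := X ≃g X))

lemma exists_iso_of_forall_exists_iso_eq_on_pair [Finite V] (f : V → V)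
    (hf : ∀ a b, ∃ c : X ≃g X, c a = f a ∧ c b = f b) :
    ∃ ρ : X ≃g X, ∀ v, ρ v = f v := by
  have hinj : Function.Injective f := fun a b hab => by
    obtain ⟨c, hca, hcb⟩ := hf a b
    exact c.injective (by rw [hca, hcb, hab])
  refine ⟨⟨Equiv.ofBijective f hinj.bijective_of_finite, fun {a b} => ?_⟩, fun _ => rfl⟩
  obtain ⟨c, hca, hcb⟩ := hf a b
  simp only [Equiv.ofBijective_apply, ← hca, ← hcb]
  exact c.map_rel_iff

end SimpleGraph

theorem exists_semiregular_matching_normal_orbits_general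
    {V : Type*} [Fintype V] (q m : ℕ) (hq : q.Prime)
    (X : SimpleGraph V) (hcard : Fintype.card V = m * q)
    (N : Subgroup (X ≃g X))
    (horb : ∀ v : V, (X.autOrbit N v).ncard = q) :
    ∃ ρ : X ≃g X, X.IsSemiregular ρ m q ∧
      ∀ v : V, X.autOrbit (Subgroup.zpowers ρ) v = X.autOrbit N v := by
  have := Fact.mk hq
  simp only [SimpleGraph.IsSemiregular, SimpleGraph.autOrbit_eq_orbit] at horb ⊢
  obtain ⟨S⟩ : Nonempty (Sylow q (orbitsStabilizer V N)) := inferInstance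
  obtain ⟨ρ, hρ⟩ := SimpleGraph.exists_iso_of_forall_exists_iso_eq_on_pair (orbitwiseSmul S)
    (exists_smul_eq_orbitwiseSmul horb)
  have horbits := orbit_zpowers_eq_of_smul_eq_orbitwiseSmul horb hρ
  refine ⟨ρ, ⟨fun v => horbits v ▸ horb v, ?_⟩, horbits⟩
  have hcount := ncard_orbits_mul_eq_card horb
  simp_rw [← horbits] at hcount
  rw [Nat.card_eq_fintype_card, hcard] at hcount
  exact Nat.eq_of_mul_eq_mul_right hq.pos hcount

theorem exists_semiregular_matching_normal_orbits
    {V : Type*} [Fintype V] (q m : ℕ) (hq : q.Prime)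
    (X : SimpleGraph V) (hcard : Fintype.card V = m * q)
    (hvt : X.IsVertexTransitive)
    (G : Subgroup (X ≃g X)) (hG : X.IsTransitiveSubgroup G)
    (N : Subgroup (X ≃g X)) (hN : X.IsNormalIn N G)
    (horb : ∀ v : V, (X.autOrbit N v).ncard = q) :
    ∃ ρ : X ≃g X, X.IsSemiregular ρ m q ∧
      ∀ v : V, X.autOrbit (Subgroup.zpowers ρ) v = X.autOrbit N v :=
  exists_semiregular_matching_normal_orbits_general q m hq X hcard N horb
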